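/- arXiv:2010.08434 — 4 statements merged into one kernel-verified Lean document; each statement's English description precedes it below -/
import Mathlib

section
/- Let G be a differentiable, positively 1-homogeneous, concave function on an open convex cone Γ of Hermitian n×n matrices containing the cone P_n of positive definite matrices. Then G satisfies G(P) ≥ det(P)^{1/n} for all positive definite P if and only if G(A + P) ≥ G(A) + det(P)^{1/n} for all A ∈ Γ and all positive definite P. -/
open scoped ComplexOrder
attribute [local instance] Matrix.normedAddCommGroup Matrix.normedSpace

/-- For a differentiable, positively 1-homogeneous, concave `G` on an open convex cone `Γ`
of Hermitian matrices containing the positive definite matrices: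
`G(P) ≥ det(P)^(1/n)` for all positive definite `P` iff
`G(A + P) ≥ G(A) + det(P)^(1/n)` for all `A ∈ Γ` and positive definite `P`. -/
theorem stmt2 (n : ℕ) (hn : 0 < n) (Γ : Set (Matrix (Fin n) (Fin n) ℂ))
    (hHerm : ∀ A ∈ Γ, A.IsHermitian)
    (hConvex : Convex ℝ Γ)
    (hCone : ∀ (α : ℝ), 0 < α → ∀ A ∈ Γ, α • A ∈ Γ)
    (hPD : ∀ P : Matrix (Fin n) (Fin n) ℂ, P.PosDef → P ∈ Γ)
    (G : Matrix (Fin n) (Fin n) ℂ → ℝ)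
    (DG : Matrix (Fin n) (Fin n) ℂ → (Matrix (Fin n) (Fin n) ℂ →L[ℝ] ℝ))
    (hDiff : ∀ A ∈ Γ, HasFDerivAt G (DG A) A)
    (hHom : ∀ (α : ℝ), 0 < α → ∀ A ∈ Γ, G (α • A) = α * G A)
    (hConc : ConcaveOn ℝ Γ G) :
    (∀ P : Matrix (Fin n) (Fin n) ℂ, P.PosDef → G P ≥ P.det.re ^ ((n : ℝ)⁻¹)) ↔
      (∀ A ∈ Γ, ∀ P : Matrix (Fin n) (Fin n) ℂ, P.PosDef →
        G (A + P) ≥ G A + P.det.re ^ ((n : ℝ)⁻¹)) := by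
  constructor
  · intro h A hA P hP
    have hPΓ := hPD P hP
    have hconc := hConc.2 hA hPΓ (by norm_num : (0:ℝ) ≤ 1/2)
      (by norm_num : (0:ℝ) ≤ 1/2) (by norm_num)
    simp only [smul_eq_mul] at hconc
    have hmid : (1/2 : ℝ) • A + (1/2 : ℝ) • P ∈ Γ :=
      hConvex hA hPΓ (by norm_num) (by norm_num) (by norm_num)
    have hhom := hHom 2 (by norm_num) _ hmid
    have heq : (2 : ℝ) • ((1/2 : ℝ) • A + (1/2 : ℝ) • P) = A + P := by
      rw [smul_add, smul_smul, smul_smul]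
      norm_num
    rw [heq] at hhom
    have hP' := h P hP
    have : G (A + P) ≥ G A + G P := by rw [hhom]; linarith
    linarith
  · intro h P hP
    have hPΓ := hPD P hP
    have h2 := h P hPΓ P hP
    have hhom := hHom 2 (by norm_num) P hPΓ
    have heq : (2 : ℝ) • P = P + P := by
      rw [two_smul]
    rw [heq] at hhom
    rw [hhom] at h2
    linarith
end

section
/- For 1 ≤ m ≤ n, the m-th elementary symmetric polynomial σ_m satisfies the comparison property on the positive orthant: for all λ ∈ ℝ^n with all λ_i > 0, (σ_m(λ)/binom(n,m))^{1/m} ≥ (λ_1 ⋯ λ_n)^{1/n}. (Maclaurin's inequality.) -/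
/-!
Each `i ∈ s` lies in exactly `(#s - 1).choose (m - 1)` of the `m`-subsets of `s`, so the product of
the monomials `∏ i ∈ t, λ i` over all `m`-subsets `t` is `(∏ i ∈ s, λ i) ^ ((#s - 1).choose (m - 1))`.
AM-GM over these `#s.choose m` monomials bounds their geometric mean by `σ_m / #s.choose m`, and
`#s * (#s - 1).choose (m - 1) = m * #s.choose m` turns the geometric mean into
`(∏ i ∈ s, λ i) ^ (m / #s)`.
-/

open Finset

namespace Finset

variable {ι : Type*} [DecidableEq ι]

theorem filter_mem_powersetCard_succ {s : Finset ι} {i : ι} (hi : i ∈ s) (m : ℕ) :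
    {t ∈ powersetCard (m + 1) s | i ∈ t} = (powersetCard m (s.erase i)).image (insert i) := by
  ext t
  simp only [mem_filter, mem_powersetCard, mem_image]
  constructor
  · rintro ⟨⟨hts, hcard⟩, hit⟩
    exact ⟨t.erase i, ⟨erase_subset_erase i hts, by rw [card_erase_of_mem hit, hcard]; rfl⟩,
      insert_erase hit⟩
  · rintro ⟨u, ⟨hus, rfl⟩, rfl⟩
    have hiu : i ∉ u := fun h => notMem_erase i s (hus h)
    exact ⟨⟨insert_subset hi (hus.trans (erase_subset i s)), card_insert_of_notMem hiu⟩,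
      mem_insert_self i u⟩

theorem card_filter_mem_powersetCard_succ {s : Finset ι} {i : ι} (hi : i ∈ s) (m : ℕ) :
    #{t ∈ powersetCard (m + 1) s | i ∈ t} = (#s - 1).choose m := by
  have hinj : Set.InjOn (insert i) (powersetCard m (s.erase i) : Set (Finset ι)) := by
    intro u hu v hv huv
    have hiu : i ∉ u := fun h => notMem_erase i s ((mem_powersetCard.1 hu).1 h)
    have hiv : i ∉ v := fun h => notMem_erase i s ((mem_powersetCard.1 hv).1 h)
    rw [← erase_insert hiu, ← erase_insert hiv, huv]
  rw [filter_mem_powersetCard_succ hi, card_image_of_injOn hinj, card_powersetCard,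
    card_erase_of_mem hi]

theorem prod_powersetCard_succ_prod {M : Type*} [CommMonoid M] (s : Finset ι) (m : ℕ)
    (f : ι → M) :
    ∏ t ∈ powersetCard (m + 1) s, ∏ i ∈ t, f i = (∏ i ∈ s, f i) ^ (#s - 1).choose m := by
  rw [prod_comm' (t' := s) (s' := fun i => {t ∈ powersetCard (m + 1) s | i ∈ t}), ← prod_pow]
  · exact prod_congr rfl fun i hi => by rw [prod_const, card_filter_mem_powersetCard_succ hi]
  · intro t i
    simp only [mem_filter, mem_powersetCard]
    exact ⟨fun ⟨hts, hit⟩ => ⟨⟨hts, hit⟩, hts.1 hit⟩, fun ⟨⟨hts, hit⟩, _⟩ => ⟨hts, hit⟩⟩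

end Finset

namespace Real

theorem prod_rpow_inv_card_le_sum_div_card {ι : Type*} {s : Finset ι} (hs : s.Nonempty)
    {z : ι → ℝ} (hz : ∀ i ∈ s, 0 ≤ z i) :
    (∏ i ∈ s, z i) ^ ((#s : ℝ)⁻¹) ≤ (∑ i ∈ s, z i) / #s := by
  simpa using geom_mean_le_arith_mean s 1 z (fun _ _ => zero_le_one) (by simpa using hs) hz

theorem prod_rpow_inv_card_le_esymm_div_choose_rpow {ι : Type*} [DecidableEq ι] {s : Finset ι}
    {f : ι → ℝ} (hf : ∀ i ∈ s, 0 ≤ f i) {m : ℕ} (hm : 1 ≤ m) (hms : m ≤ #s) :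
    (∏ i ∈ s, f i) ^ ((#s : ℝ)⁻¹) ≤
      ((∑ t ∈ powersetCard m s, ∏ i ∈ t, f i) / ((#s).choose m)) ^ ((m : ℝ)⁻¹) := by
  obtain ⟨k, rfl⟩ : ∃ k, m = k + 1 := ⟨m - 1, by omega⟩
  obtain ⟨n, hn⟩ : ∃ n, #s = n + 1 := ⟨#s - 1, by omega⟩
  have hprod : 0 ≤ ∏ i ∈ s, f i := prod_nonneg hf
  have hmonomial : ∀ t ∈ powersetCard (k + 1) s, 0 ≤ ∏ i ∈ t, f i :=
    fun t ht => prod_nonneg fun i hi => hf i ((mem_powersetCard.1 ht).1 hi)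
  have hchoose : ((n + 1 : ℕ) : ℝ) * n.choose k = (n + 1).choose (k + 1) * (k + 1 : ℕ) := by
    exact_mod_cast Nat.add_one_mul_choose_eq n k
  have hchoose_pos : (0 : ℝ) < (n + 1).choose (k + 1) := by
    exact_mod_cast Nat.choose_pos (by omega)
  calc (∏ i ∈ s, f i) ^ ((#s : ℝ)⁻¹)
      = ((∏ t ∈ powersetCard (k + 1) s, ∏ i ∈ t, f i) ^
          ((#(powersetCard (k + 1) s) : ℝ)⁻¹)) ^ (((k + 1 : ℕ) : ℝ)⁻¹) := by
        rw [prod_powersetCard_succ_prod, card_powersetCard, hn, Nat.add_sub_cancel,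
          ← rpow_natCast, ← rpow_mul hprod, ← rpow_mul hprod]
        congr 1
        field_simp
        linear_combination -hchoose
    _ ≤ ((∑ t ∈ powersetCard (k + 1) s, ∏ i ∈ t, f i) / ((#s).choose (k + 1))) ^
          (((k + 1 : ℕ) : ℝ)⁻¹) := by
        rw [← card_powersetCard]
        exact rpow_le_rpow (rpow_nonneg (prod_nonneg hmonomial) _)
          (prod_rpow_inv_card_le_sum_div_card (powersetCard_nonempty.2 hms) hmonomial)
          (by positivity)

end Real

/-- Maclaurin's inequality: for `1 ≤ m ≤ n` and `λ ∈ ℝ^n` with all coordinates positive,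
`(σ_m(λ) / (n choose m))^(1/m) ≥ (λ₁ ⋯ λ_n)^(1/n)`. -/
theorem stmt5 (n m : ℕ) (hm1 : 1 ≤ m) (hmn : m ≤ n)
    (lam : Fin n → ℝ) (hpos : ∀ i, 0 < lam i) :
    ((∑ s ∈ Finset.powersetCard m (Finset.univ : Finset (Fin n)), ∏ i ∈ s, lam i) /
        (n.choose m)) ^ ((m : ℝ)⁻¹) ≥ (∏ i, lam i) ^ ((n : ℝ)⁻¹) := by
  have h := Real.prod_rpow_inv_card_le_esymm_div_choose_rpow (s := univ)
    (fun i _ => (hpos i).le) hm1 (by simpa using hmn)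
  rwa [card_univ, Fintype.card_fin] at h
end

section
/- For n = 2 and a ∈ [0,1], the square root of F̂(λ₁, λ₂) = (1−a)²λ₁λ₂ + a(λ₁+λ₂)² is a concave function on the cone Γ_{2−a} = {(λ₁,λ₂) : λ₁ + aλ₂ > 0, λ₂ + aλ₁ > 0}. -/
/-- For `a ∈ [0,1]`, the square root of `F̂(λ₁,λ₂) = (1-a)²λ₁λ₂ + a(λ₁+λ₂)²` is concave
on the cone `Γ_{2-a} = {(λ₁,λ₂) : λ₁ + aλ₂ > 0, λ₂ + aλ₁ > 0}`. -/
theorem stmt8 (a : ℝ) (ha0 : 0 ≤ a) (ha1 : a ≤ 1) :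
    ConcaveOn ℝ {p : ℝ × ℝ | 0 < p.1 + a * p.2 ∧ 0 < p.2 + a * p.1}
      (fun p => Real.sqrt ((1 - a) ^ 2 * p.1 * p.2 + a * (p.1 + p.2) ^ 2)) := by
  have key : ∀ p : ℝ × ℝ,
      (1 - a) ^ 2 * p.1 * p.2 + a * (p.1 + p.2) ^ 2
        = (p.1 + a * p.2) * (p.2 + a * p.1) := by
    intro p; ring
  constructor
  · -- convexity of the set
    intro p hp q hq t s ht hs hts
    obtain ⟨hp1, hp2⟩ := hp
    obtain ⟨hq1, hq2⟩ := hq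
    constructor <;> simp only [Prod.fst_add, Prod.snd_add, Prod.smul_fst, Prod.smul_snd,
      smul_eq_mul]
    · rcases eq_or_lt_of_le ht with h | h
      · nlinarith
      · nlinarith [mul_le_mul_of_nonneg_left hq1.le hs]
    · rcases eq_or_lt_of_le ht with h | h
      · nlinarith
      · nlinarith [mul_le_mul_of_nonneg_left hq2.le hs]
  · intro p hp q hq t s ht hs hts
    obtain ⟨hp1, hp2⟩ := hp
    obtain ⟨hq1, hq2⟩ := hq
    simp only [key, smul_eq_mul, Prod.fst_add, Prod.snd_add, Prod.smul_fst, Prod.smul_snd]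
    set A := Real.sqrt (p.1 + a * p.2) with hA
    set B := Real.sqrt (p.2 + a * p.1) with hB
    set C := Real.sqrt (q.1 + a * q.2) with hC
    set D := Real.sqrt (q.2 + a * q.1) with hD
    have hA2 : A ^ 2 = p.1 + a * p.2 := Real.sq_sqrt hp1.le
    have hB2 : B ^ 2 = p.2 + a * p.1 := Real.sq_sqrt hp2.le
    have hC2 : C ^ 2 = q.1 + a * q.2 := Real.sq_sqrt hq1.le
    have hD2 : D ^ 2 = q.2 + a * q.1 := Real.sq_sqrt hq2.le
    have hAn : 0 ≤ A := Real.sqrt_nonneg _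
    have hBn : 0 ≤ B := Real.sqrt_nonneg _
    have hCn : 0 ≤ C := Real.sqrt_nonneg _
    have hDn : 0 ≤ D := Real.sqrt_nonneg _
    have hPQ : Real.sqrt ((p.1 + a * p.2) * (p.2 + a * p.1)) = A * B := by
      rw [hA, hB, ← Real.sqrt_mul hp1.le]
    have hQQ : Real.sqrt ((q.1 + a * q.2) * (q.2 + a * q.1)) = C * D := by
      rw [hC, hD, ← Real.sqrt_mul hq1.le]
    rw [hPQ, hQQ]
    have hlhs : 0 ≤ t * (A * B) + s * (C * D) := by positivity
    rw [show (1 - a) ^ 2 * (t * p.1 + s * q.1) * (t * p.2 + s * q.2)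
        + a * (t * p.1 + s * q.1 + (t * p.2 + s * q.2)) ^ 2
        = (t * A ^ 2 + s * C ^ 2) * (t * B ^ 2 + s * D ^ 2) by
      rw [hA2, hB2, hC2, hD2]; ring]
    rw [show Real.sqrt ((t * A ^ 2 + s * C ^ 2) * (t * B ^ 2 + s * D ^ 2))
        = Real.sqrt (t * A ^ 2 + s * C ^ 2) * Real.sqrt (t * B ^ 2 + s * D ^ 2) from
      Real.sqrt_mul (by positivity) _]
    have h1 : (t * (A * B) + s * (C * D)) ^ 2
        ≤ (t * A ^ 2 + s * C ^ 2) * (t * B ^ 2 + s * D ^ 2) := by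
      nlinarith [sq_nonneg (A * D - B * C), mul_nonneg ht hs]
    calc t * (A * B) + s * (C * D)
        = Real.sqrt ((t * (A * B) + s * (C * D)) ^ 2) := (Real.sqrt_sq hlhs).symm
      _ ≤ Real.sqrt ((t * A ^ 2 + s * C ^ 2) * (t * B ^ 2 + s * D ^ 2)) :=
          Real.sqrt_le_sqrt h1
      _ = _ := Real.sqrt_mul (by positivity) _
end

section
/- For n = 3, let u(z) = ‖z'‖^{4/3}(1 + |z₁|²) and φ(z) = ‖z'‖^{4/3}(1 + R² − ‖z'‖²) with z = (z₁, z₂, z₃) ∈ ℂ³ and z' = (z₂, z₃). Let a^{i j̄}(z) be the cofactor matrix of the complex Hessian of u (the derivative of det at D²u). Then for z' ≠ 0, Σ_{i,j} a^{i j̄}(z) φ_{i j̄}(z) = −(70/27 + (50/27)|z₁|²)‖z'‖² + (16/27)(1 + R²) + (8/27)(1 + R²)|z₁|². -/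
/-- Wirtinger derivative `∂u/∂z_j`, via the real Fréchet derivative. -/
noncomputable def wd {n : ℕ} (j : Fin n) (u : (Fin n → ℂ) → ℂ) (z : Fin n → ℂ) : ℂ :=
  (1 / 2) * (fderiv ℝ u z (Pi.single j 1) - Complex.I * fderiv ℝ u z (Pi.single j Complex.I))

/-- Conjugate Wirtinger derivative `∂u/∂z̄_j`. -/
noncomputable def wdbar {n : ℕ} (j : Fin n) (u : (Fin n → ℂ) → ℂ) (z : Fin n → ℂ) : ℂ :=
  (1 / 2) * (fderiv ℝ u z (Pi.single j 1) + Complex.I * fderiv ℝ u z (Pi.single j Complex.I))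

/-- Complex Hessian `(∂²u/∂z_i∂z̄_j)_{i,j}`. -/
noncomputable def cHess {n : ℕ} (u : (Fin n → ℂ) → ℂ) (z : Fin n → ℂ) :
    Matrix (Fin n) (Fin n) ℂ :=
  Matrix.of fun i j => wd i (fun w => wdbar j u w) z

/-- Squared Euclidean norm of `z' = (z_2, …, z_n)`. -/
noncomputable def nsq' {n : ℕ} (z : Fin n → ℂ) : ℝ :=
  ∑ j ∈ Finset.univ.filter (fun j : Fin n => (j : ℕ) ≠ 0), Complex.normSq (z j)

open Complex

noncomputable def prj (j : Fin 3) : (Fin 3 → ℂ) →L[ℝ] ℂ :=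
  (ContinuousLinearMap.proj j : ((i : Fin 3) → ℂ) →L[ℂ] ℂ).restrictScalars ℝ

@[simp] lemma prj_apply (j : Fin 3) (v : Fin 3 → ℂ) : prj j v = v j := rfl

noncomputable def dsq (a : ℂ) : ℂ →L[ℝ] ℝ :=
  (2:ℝ) • (Complex.reCLM.comp ((ContinuousLinearMap.mul ℂ ℂ ((starRingEnd ℂ) a)).restrictScalars ℝ))

@[simp] lemma dsq_apply (a v : ℂ) : dsq a v = 2 * ((starRingEnd ℂ) a * v).re := rfl

lemma hasFDerivAt_normSq (a : ℂ) : HasFDerivAt Complex.normSq (dsq a) a := by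
  have h : HasFDerivAt (fun z : ℂ => z.re * z.re + z.im * z.im)
      ((a.re • Complex.reCLM + a.re • Complex.reCLM) +
       (a.im • Complex.imCLM + a.im • Complex.imCLM)) a :=
    ((Complex.reCLM.hasFDerivAt.mul Complex.reCLM.hasFDerivAt).add
      (Complex.imCLM.hasFDerivAt.mul Complex.imCLM.hasFDerivAt))
  have he : (fun z : ℂ => z.re * z.re + z.im * z.im) = Complex.normSq := by
    funext z; rw [Complex.normSq_apply]
  have hL : ((a.re • Complex.reCLM + a.re • Complex.reCLM) +
       (a.im • Complex.imCLM + a.im • Complex.imCLM)) = dsq a := by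
    ext v
    simp [dsq, Complex.mul_re]
    ring
  rw [← he, ← hL]
  exact h

noncomputable def sfun (w : Fin 3 → ℂ) : ℝ := Complex.normSq (w 1) + Complex.normSq (w 2)

noncomputable def tfun (w : Fin 3 → ℂ) : ℝ := Complex.normSq (w 0)

lemma nsq'_eq (z : Fin 3 → ℂ) : nsq' z = sfun z := by
  have : (Finset.univ.filter (fun j : Fin 3 => (j : ℕ) ≠ 0)) = {1, 2} := by decide
  rw [nsq', this]
  rw [Finset.sum_insert (by decide), Finset.sum_singleton, sfun]

lemma continuous_sfun : Continuous sfun :=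
  (Complex.continuous_normSq.comp (continuous_apply (1 : Fin 3))).add
    (Complex.continuous_normSq.comp (continuous_apply (2 : Fin 3)))

noncomputable def Ls (w : Fin 3 → ℂ) : (Fin 3 → ℂ) →L[ℝ] ℝ :=
  (dsq (w 1)).comp (prj 1) + (dsq (w 2)).comp (prj 2)

noncomputable def Lt (w : Fin 3 → ℂ) : (Fin 3 → ℂ) →L[ℝ] ℝ := (dsq (w 0)).comp (prj 0)

@[simp] lemma Ls_apply (w v : Fin 3 → ℂ) :
    Ls w v = 2 * ((starRingEnd ℂ) (w 1) * v 1).re + 2 * ((starRingEnd ℂ) (w 2) * v 2).re := rfl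

@[simp] lemma Lt_apply (w v : Fin 3 → ℂ) : Lt w v = 2 * ((starRingEnd ℂ) (w 0) * v 0).re := rfl

lemma hasFDerivAt_coord_normSq (j : Fin 3) (w : Fin 3 → ℂ) :
    HasFDerivAt (fun w : Fin 3 → ℂ => Complex.normSq (w j)) ((dsq (w j)).comp (prj j)) w :=
  (hasFDerivAt_normSq (w j)).comp w (prj j).hasFDerivAt

lemma hasFDerivAt_sfun (w : Fin 3 → ℂ) : HasFDerivAt sfun (Ls w) w :=
  (hasFDerivAt_coord_normSq 1 w).add (hasFDerivAt_coord_normSq 2 w)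

lemma hasFDerivAt_tfun (w : Fin 3 → ℂ) : HasFDerivAt tfun (Lt w) w :=
  hasFDerivAt_coord_normSq 0 w

lemma hasFDerivAt_spow (q : ℝ) (w : Fin 3 → ℂ) (hw : sfun w ≠ 0) :
    HasFDerivAt (fun w => sfun w ^ q) ((q * sfun w ^ (q - 1)) • Ls w) w :=
  (Real.hasDerivAt_rpow_const (Or.inl hw)).comp_hasFDerivAt w (hasFDerivAt_sfun w)

lemma wdbar_eq_of_hasFDerivAt {f : (Fin 3 → ℂ) → ℂ} {L : (Fin 3 → ℂ) →L[ℝ] ℂ}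
    {z : Fin 3 → ℂ} (h : HasFDerivAt f L z) (j : Fin 3) :
    wdbar j f z = (1 / 2) * (L (Pi.single j 1) + Complex.I * L (Pi.single j Complex.I)) := by
  rw [wdbar, h.fderiv]

lemma wd_eq_of_hasFDerivAt {f : (Fin 3 → ℂ) → ℂ} {L : (Fin 3 → ℂ) →L[ℝ] ℂ}
    {z : Fin 3 → ℂ} (h : HasFDerivAt f L z) (j : Fin 3) :
    wd j f z = (1 / 2) * (L (Pi.single j 1) - Complex.I * L (Pi.single j Complex.I)) := by
  rw [wd, h.fderiv]

lemma wdbar_u (u : (Fin 3 → ℂ) → ℂ)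
    (hu : ∀ z, u z = ((nsq' z ^ (1 - 1 / (3 : ℝ)) * (1 + Complex.normSq (z 0)) : ℝ) : ℂ))
    (w : Fin 3 → ℂ) (hw : sfun w ≠ 0) (j : Fin 3) :
    wdbar j u w = if j = 0 then ((sfun w ^ ((2:ℝ)/3) : ℝ) : ℂ) * w 0
      else (((2/3 * (1 + tfun w) * sfun w ^ (-(1:ℝ)/3)) : ℝ) : ℂ) * w j := by
  have hu2 : u = fun w => (((sfun w ^ ((2:ℝ)/3) * (1 + tfun w)) : ℝ) : ℂ) := by
    funext w
    rw [hu w, nsq'_eq]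
    norm_num [tfun]
  have h1 := hasFDerivAt_spow ((2:ℝ)/3) w hw
  rw [show ((2:ℝ)/3 - 1 : ℝ) = -(1:ℝ)/3 by norm_num] at h1
  have h2 : HasFDerivAt (fun w => 1 + tfun w) (Lt w) w := (hasFDerivAt_tfun w).const_add 1
  have hreal := h1.mul h2
  have hC : HasFDerivAt u (Complex.ofRealCLM.comp
      ((sfun w ^ ((2:ℝ)/3)) • Lt w + (1 + tfun w) • (((2:ℝ)/3 * sfun w ^ (-(1:ℝ)/3)) • Ls w))) w := by
    rw [hu2]
    exact Complex.ofRealCLM.hasFDerivAt.comp w hreal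
  rw [wdbar_eq_of_hasFDerivAt hC j]
  fin_cases j <;> simp [Complex.ext_iff, Complex.mul_re, Complex.mul_im] <;>
    constructor <;> (try trivial) <;> ring

lemma wdbar_phi (R : ℝ) (φ : (Fin 3 → ℂ) → ℂ)
    (hφ : ∀ z, φ z = ((nsq' z ^ (1 - 1 / (3 : ℝ)) * (1 + R ^ 2 - nsq' z) : ℝ) : ℂ))
    (w : Fin 3 → ℂ) (hw : sfun w ≠ 0) (j : Fin 3) :
    wdbar j φ w = if j = 0 then 0
      else (((2/3 * (1 + R ^ 2 - sfun w) * sfun w ^ (-(1:ℝ)/3) - sfun w ^ ((2:ℝ)/3)) : ℝ) : ℂ) * w j := by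
  have hφ2 : φ = fun w => (((sfun w ^ ((2:ℝ)/3) * (1 + R ^ 2 - sfun w)) : ℝ) : ℂ) := by
    funext w
    rw [hφ w, nsq'_eq]
    norm_num
  have h1 := hasFDerivAt_spow ((2:ℝ)/3) w hw
  rw [show ((2:ℝ)/3 - 1 : ℝ) = -(1:ℝ)/3 by norm_num] at h1
  have h2 : HasFDerivAt (fun w => 1 + R ^ 2 - sfun w) (-Ls w) w :=
    (hasFDerivAt_sfun w).const_sub (1 + R ^ 2)
  have hreal := h1.mul h2
  have hC : HasFDerivAt φ (Complex.ofRealCLM.comp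
      ((sfun w ^ ((2:ℝ)/3)) • (-Ls w) + (1 + R ^ 2 - sfun w) • (((2:ℝ)/3 * sfun w ^ (-(1:ℝ)/3)) • Ls w))) w := by
    rw [hφ2]
    exact Complex.ofRealCLM.hasFDerivAt.comp w hreal
  rw [wdbar_eq_of_hasFDerivAt hC j]
  fin_cases j <;> simp [Complex.ext_iff, Complex.mul_re, Complex.mul_im] <;>
    constructor <;> (try trivial) <;> ring

lemma wd_congr {f g : (Fin 3 → ℂ) → ℂ} {z : Fin 3 → ℂ} (h : f =ᶠ[nhds z] g) (i : Fin 3) :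
    wd i f z = wd i g z := by
  rw [wd, wd, h.fderiv_eq]

lemma wd_zero (i : Fin 3) (z : Fin 3 → ℂ) : wd i (fun _ => (0:ℂ)) z = 0 := by
  rw [wd, fderiv_fun_const]
  simp

lemma wd_ofReal_mul_coord {g : (Fin 3 → ℂ) → ℝ} {Dg : (Fin 3 → ℂ) →L[ℝ] ℝ} {z : Fin 3 → ℂ}
    (hg : HasFDerivAt g Dg z) (i j : Fin 3) :
    wd i (fun w => ((g w : ℝ) : ℂ) * w j) z
      = ((1/2) * ((Dg (Pi.single i 1) : ℂ) - Complex.I * (Dg (Pi.single i Complex.I) : ℂ))) * z j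
        + (g z : ℂ) * (if i = j then 1 else 0) := by
  have hgc : HasFDerivAt (fun w : Fin 3 → ℂ => ((g w : ℝ) : ℂ)) (Complex.ofRealCLM.comp Dg) z :=
    Complex.ofRealCLM.hasFDerivAt.comp z hg
  have hj : HasFDerivAt (fun w : Fin 3 → ℂ => w j) (prj j) z := (prj j).hasFDerivAt
  have hC := hgc.fun_mul hj
  rw [wd_eq_of_hasFDerivAt hC i]
  rcases eq_or_ne i j with rfl | hij
  · simp [Pi.single_apply, Complex.ext_iff, Complex.mul_re, Complex.mul_im]
    constructor <;> ring
  · simp [Pi.single_apply, hij, Ne.symm hij, Complex.ext_iff, Complex.mul_re, Complex.mul_im]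
    constructor <;> ring

set_option maxHeartbeats 2000000 in
/-- For `n = 3`, `u(z) = ‖z'‖^{4/3}(1+|z₁|²)`, `φ(z) = ‖z'‖^{4/3}(1+R²-‖z'‖²)`, and
`a^{i j̄}` the cofactor matrix of the complex Hessian of `u` (the derivative of `det`
at `D²u`, so that `Σ_{i,j} a^{i j̄} φ_{i j̄} = trace(adj(D²u)·D²φ)`): for `z' ≠ 0`,
`Σ_{i,j} a^{i j̄}(z) φ_{i j̄}(z)
  = -(70/27 + (50/27)|z₁|²)‖z'‖² + (16/27)(1+R²) + (8/27)(1+R²)|z₁|²`. -/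
theorem stmt13 (R : ℝ)
    (u φ : (Fin 3 → ℂ) → ℂ)
    (hu : ∀ z, u z = ((nsq' z ^ (1 - 1 / (3 : ℝ)) * (1 + Complex.normSq (z 0)) : ℝ) : ℂ))
    (hφ : ∀ z, φ z = ((nsq' z ^ (1 - 1 / (3 : ℝ)) * (1 + R ^ 2 - nsq' z) : ℝ) : ℂ))
    (z : Fin 3 → ℂ) (hz : ∃ j : Fin 3, (j : ℕ) ≠ 0 ∧ z j ≠ 0) :
    Matrix.trace ((cHess u z).adjugate * cHess φ z) =
      ((-(70 / 27 + 50 / 27 * Complex.normSq (z 0)) * nsq' z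
          + 16 / 27 * (1 + R ^ 2) + 8 / 27 * (1 + R ^ 2) * Complex.normSq (z 0) : ℝ) : ℂ) := by
  have hspos : 0 < sfun z := by
    obtain ⟨j, hj0, hjz⟩ := hz
    have h1 : 0 ≤ Complex.normSq (z 1) := Complex.normSq_nonneg _
    have h2 : 0 ≤ Complex.normSq (z 2) := Complex.normSq_nonneg _
    have hj : z 1 ≠ 0 ∨ z 2 ≠ 0 := by
      fin_cases j
      · exact absurd rfl hj0
      · exact Or.inl hjz
      · exact Or.inr hjz
    rcases hj with hj | hj
    · have := Complex.normSq_pos.mpr hj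
      unfold sfun; nlinarith [this]
    · have := Complex.normSq_pos.mpr hj
      unfold sfun; nlinarith [this]
  have hsz : sfun z ≠ 0 := ne_of_gt hspos
  set s : ℝ := sfun z with hsdef
  set t : ℝ := tfun z with htdef
  set c : ℝ := s ^ (-(4:ℝ)/3) with hcdef
  -- rpow identities
  have hc1 : s ^ (-(1:ℝ)/3) = c * s := by
    rw [hcdef, show (-(1:ℝ)/3) = (-(4:ℝ)/3) + 1 by norm_num, Real.rpow_add hspos, Real.rpow_one]
  have hc2 : s ^ ((2:ℝ)/3) = c * s ^ 2 := by
    rw [hcdef, show ((2:ℝ)/3) = (-(4:ℝ)/3) + ((2:ℕ):ℝ) by norm_num, Real.rpow_add hspos,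
      Real.rpow_natCast]
  have hkey : (c:ℂ) * c * c * ((s:ℂ) * s * s * s) = 1 := by
    have h3 : c * c * c * (s * s * s * s) = 1 := by
      have hc3 : c ^ (3:ℕ) = s ^ ((-(4:ℝ)/3) * (3:ℕ)) := by
        rw [Real.rpow_mul hspos.le, Real.rpow_natCast]
      have : c ^ (3:ℕ) * s ^ (4:ℕ) = 1 := by
        rw [hc3, show ((-(4:ℝ)/3) * ((3:ℕ):ℝ)) = (-4 : ℝ) by norm_num,
          ← Real.rpow_natCast s 4, ← Real.rpow_add hspos]
        norm_num
      nlinarith [this]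
    exact_mod_cast congrArg (Complex.ofReal) h3
  have hUev : ∀ᶠ w in nhds z, sfun w ≠ 0 := continuous_sfun.continuousAt.eventually_ne hsz
  have hEu0 : (fun w => wdbar 0 u w) =ᶠ[nhds z]
      (fun w => ((sfun w ^ ((2:ℝ)/3) : ℝ) : ℂ) * w 0) := by
    filter_upwards [hUev] with w hw
    simpa using wdbar_u u hu w hw 0
  have hEu1 : (fun w => wdbar 1 u w) =ᶠ[nhds z]
      (fun w => (((2/3 * (1 + tfun w) * sfun w ^ (-(1:ℝ)/3)) : ℝ) : ℂ) * w 1) := by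
    filter_upwards [hUev] with w hw
    simpa using wdbar_u u hu w hw 1
  have hEp0 : (fun w => wdbar 0 φ w) =ᶠ[nhds z] (fun _ => (0:ℂ)) := by
    filter_upwards [hUev] with w hw
    simpa using wdbar_phi R φ hφ w hw 0
  have hEp1 : (fun w => wdbar 1 φ w) =ᶠ[nhds z]
      (fun w => (((2/3 * (1 + R ^ 2 - sfun w) * sfun w ^ (-(1:ℝ)/3) - sfun w ^ ((2:ℝ)/3)) : ℝ) : ℂ) * w 1) := by
    filter_upwards [hUev] with w hw
    simpa using wdbar_phi R φ hφ w hw 1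
  have hg0 : HasFDerivAt (fun w => sfun w ^ ((2:ℝ)/3))
      (((2:ℝ)/3 * s ^ (-(1:ℝ)/3)) • Ls z) z := by
    have h := hasFDerivAt_spow ((2:ℝ)/3) z hsz
    rw [show ((2:ℝ)/3 - 1 : ℝ) = -(1:ℝ)/3 by norm_num] at h
    exact h
  have hpw : HasFDerivAt (fun w => sfun w ^ (-(1:ℝ)/3))
      ((-(1:ℝ)/3 * s ^ (-(4:ℝ)/3)) • Ls z) z := by
    have h := hasFDerivAt_spow (-(1:ℝ)/3) z hsz
    rw [show (-(1:ℝ)/3 - 1 : ℝ) = -(4:ℝ)/3 by norm_num] at h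
    exact h
  have hgu := (((hasFDerivAt_tfun z).const_add 1).const_mul ((2:ℝ)/3)).fun_mul hpw
  have hgp := ((((hasFDerivAt_sfun z).const_sub (1 + R^2)).const_mul ((2:ℝ)/3)).fun_mul hpw).fun_sub hg0
  have u00 : wd 0 (fun w => wdbar 0 u w) z = (c:ℂ) * (s:ℂ)^2 := by
    rw [wd_congr hEu0 0, wd_ofReal_mul_coord hg0 0 0]
    simp [Pi.single_apply]
    rw [hc2]
    push_cast
    ring
  have u21 : wd 2 (fun w => wdbar 1 u w) z
      = (1+(t:ℂ))*(-(2/9)*(c:ℂ)*(starRingEnd ℂ) (z 2)*z 1) := by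
    rw [wd_congr hEu1 2, wd_ofReal_mul_coord hgu 2 1]
    simp [Pi.single_apply, ← hsdef, ← htdef, -mul_eq_mul_right_iff, -mul_eq_mul_left_iff]
    try simp only [hc1, hc2, ← hcdef]
    push_cast
    try ring
    try exact ⟨trivial, trivial⟩
    try (simp [Complex.ext_iff, Complex.mul_re, Complex.mul_im] <;> constructor <;> (try trivial) <;> ring)
  have hEu2 : (fun w => wdbar 2 u w) =ᶠ[nhds z]
      (fun w => (((2/3 * (1 + tfun w) * sfun w ^ (-(1:ℝ)/3)) : ℝ) : ℂ) * w 2) := by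
    filter_upwards [hUev] with w hw
    simpa using wdbar_u u hu w hw 2
  have hEp2 : (fun w => wdbar 2 φ w) =ᶠ[nhds z]
      (fun w => (((2/3 * (1 + R ^ 2 - sfun w) * sfun w ^ (-(1:ℝ)/3) - sfun w ^ ((2:ℝ)/3)) : ℝ) : ℂ) * w 2) := by
    filter_upwards [hUev] with w hw
    simpa using wdbar_phi R φ hφ w hw 2
  have u10 : wd 1 (fun w => wdbar 0 u w) z = 2/3*(c:ℂ)*(s:ℂ)*(starRingEnd ℂ) (z 1)*z 0 := by
    rw [wd_congr hEu0 1, wd_ofReal_mul_coord hg0 1 0]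
    simp [Pi.single_apply, ← hsdef, ← htdef, -mul_eq_mul_right_iff, -mul_eq_mul_left_iff]
    try simp only [hc1, hc2, ← hcdef]
    try push_cast
    try ring
    try exact ⟨trivial, trivial⟩
    try (simp [Complex.ext_iff, Complex.mul_re, Complex.mul_im] <;> constructor <;> (try trivial) <;> ring)
  have u20 : wd 2 (fun w => wdbar 0 u w) z = 2/3*(c:ℂ)*(s:ℂ)*(starRingEnd ℂ) (z 2)*z 0 := by
    rw [wd_congr hEu0 2, wd_ofReal_mul_coord hg0 2 0]
    simp [Pi.single_apply, ← hsdef, ← htdef, -mul_eq_mul_right_iff, -mul_eq_mul_left_iff]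
    try simp only [hc1, hc2, ← hcdef]
    try push_cast
    try ring
    try exact ⟨trivial, trivial⟩
    try (simp [Complex.ext_iff, Complex.mul_re, Complex.mul_im] <;> constructor <;> (try trivial) <;> ring)
  have u01 : wd 0 (fun w => wdbar 1 u w) z = 2/3*(c:ℂ)*(s:ℂ)*(starRingEnd ℂ) (z 0)*z 1 := by
    rw [wd_congr hEu1 0, wd_ofReal_mul_coord hgu 0 1]
    simp [Pi.single_apply, ← hsdef, ← htdef, -mul_eq_mul_right_iff, -mul_eq_mul_left_iff]
    try simp only [hc1, hc2, ← hcdef]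
    try push_cast
    try ring
    try exact ⟨trivial, trivial⟩
    try (simp [Complex.ext_iff, Complex.mul_re, Complex.mul_im] <;> constructor <;> (try trivial) <;> ring)
  have u11 : wd 1 (fun w => wdbar 1 u w) z = (1+(t:ℂ))*(-(2/9)*(c:ℂ)*(starRingEnd ℂ) (z 1)*z 1 + 2/3*(c:ℂ)*(s:ℂ)) := by
    rw [wd_congr hEu1 1, wd_ofReal_mul_coord hgu 1 1]
    simp [Pi.single_apply, ← hsdef, ← htdef, -mul_eq_mul_right_iff, -mul_eq_mul_left_iff]
    try simp only [hc1, hc2, ← hcdef]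
    try push_cast
    try ring
    try exact ⟨trivial, trivial⟩
    try (simp [Complex.ext_iff, Complex.mul_re, Complex.mul_im] <;> constructor <;> (try trivial) <;> ring)
  have u02 : wd 0 (fun w => wdbar 2 u w) z = 2/3*(c:ℂ)*(s:ℂ)*(starRingEnd ℂ) (z 0)*z 2 := by
    rw [wd_congr hEu2 0, wd_ofReal_mul_coord hgu 0 2]
    simp [Pi.single_apply, ← hsdef, ← htdef, -mul_eq_mul_right_iff, -mul_eq_mul_left_iff]
    try simp only [hc1, hc2, ← hcdef]
    try push_cast
    try ring
    try exact ⟨trivial, trivial⟩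
    try (simp [Complex.ext_iff, Complex.mul_re, Complex.mul_im] <;> constructor <;> (try trivial) <;> ring)
  have u12 : wd 1 (fun w => wdbar 2 u w) z = (1+(t:ℂ))*(-(2/9)*(c:ℂ)*(starRingEnd ℂ) (z 1)*z 2) := by
    rw [wd_congr hEu2 1, wd_ofReal_mul_coord hgu 1 2]
    simp [Pi.single_apply, ← hsdef, ← htdef, -mul_eq_mul_right_iff, -mul_eq_mul_left_iff]
    try simp only [hc1, hc2, ← hcdef]
    try push_cast
    try ring
    try exact ⟨trivial, trivial⟩
    try (simp [Complex.ext_iff, Complex.mul_re, Complex.mul_im] <;> constructor <;> (try trivial) <;> ring)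
  have u22 : wd 2 (fun w => wdbar 2 u w) z = (1+(t:ℂ))*(-(2/9)*(c:ℂ)*(starRingEnd ℂ) (z 2)*z 2 + 2/3*(c:ℂ)*(s:ℂ)) := by
    rw [wd_congr hEu2 2, wd_ofReal_mul_coord hgu 2 2]
    simp [Pi.single_apply, ← hsdef, ← htdef, -mul_eq_mul_right_iff, -mul_eq_mul_left_iff]
    try simp only [hc1, hc2, ← hcdef]
    try push_cast
    try ring
    try exact ⟨trivial, trivial⟩
    try (simp [Complex.ext_iff, Complex.mul_re, Complex.mul_im] <;> constructor <;> (try trivial) <;> ring)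
  have p00 : wd 0 (fun w => wdbar 0 φ w) z = 0 := by
    rw [wd_congr hEp0 0, wd_zero]
  have p10 : wd 1 (fun w => wdbar 0 φ w) z = 0 := by
    rw [wd_congr hEp0 1, wd_zero]
  have p20 : wd 2 (fun w => wdbar 0 φ w) z = 0 := by
    rw [wd_congr hEp0 2, wd_zero]
  have p01 : wd 0 (fun w => wdbar 1 φ w) z = 0 := by
    rw [wd_congr hEp1 0, wd_ofReal_mul_coord hgp 0 1]
    simp [Pi.single_apply, ← hsdef, ← htdef, -mul_eq_mul_right_iff, -mul_eq_mul_left_iff]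
    try simp only [hc1, hc2, ← hcdef]
    try push_cast
    try ring
    try exact ⟨trivial, trivial⟩
    try (simp [Complex.ext_iff, Complex.mul_re, Complex.mul_im] <;> constructor <;> (try trivial) <;> ring)
  have p11 : wd 1 (fun w => wdbar 1 φ w) z = (-(2/9)*(1+(R:ℂ)^2)*(c:ℂ) - 10/9*(c:ℂ)*(s:ℂ))*(starRingEnd ℂ) (z 1)*z 1 + (2/3*(1+(R:ℂ)^2)*(c:ℂ)*(s:ℂ) - 5/3*(c:ℂ)*(s:ℂ)^2) := by
    rw [wd_congr hEp1 1, wd_ofReal_mul_coord hgp 1 1]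
    simp [Pi.single_apply, ← hsdef, ← htdef, -mul_eq_mul_right_iff, -mul_eq_mul_left_iff]
    try simp only [hc1, hc2, ← hcdef]
    try push_cast
    try ring
    try exact ⟨trivial, trivial⟩
    try (simp [Complex.ext_iff, Complex.mul_re, Complex.mul_im] <;> constructor <;> (try trivial) <;> ring)
  have p21 : wd 2 (fun w => wdbar 1 φ w) z = (-(2/9)*(1+(R:ℂ)^2)*(c:ℂ) - 10/9*(c:ℂ)*(s:ℂ))*(starRingEnd ℂ) (z 2)*z 1 := by
    rw [wd_congr hEp1 2, wd_ofReal_mul_coord hgp 2 1]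
    simp [Pi.single_apply, ← hsdef, ← htdef, -mul_eq_mul_right_iff, -mul_eq_mul_left_iff]
    try simp only [hc1, hc2, ← hcdef]
    try push_cast
    try ring
    try exact ⟨trivial, trivial⟩
    try (simp [Complex.ext_iff, Complex.mul_re, Complex.mul_im] <;> constructor <;> (try trivial) <;> ring)
  have p02 : wd 0 (fun w => wdbar 2 φ w) z = 0 := by
    rw [wd_congr hEp2 0, wd_ofReal_mul_coord hgp 0 2]
    simp [Pi.single_apply, ← hsdef, ← htdef, -mul_eq_mul_right_iff, -mul_eq_mul_left_iff]
    try simp only [hc1, hc2, ← hcdef]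
    try push_cast
    try ring
    try exact ⟨trivial, trivial⟩
    try (simp [Complex.ext_iff, Complex.mul_re, Complex.mul_im] <;> constructor <;> (try trivial) <;> ring)
  have p12 : wd 1 (fun w => wdbar 2 φ w) z = (-(2/9)*(1+(R:ℂ)^2)*(c:ℂ) - 10/9*(c:ℂ)*(s:ℂ))*(starRingEnd ℂ) (z 1)*z 2 := by
    rw [wd_congr hEp2 1, wd_ofReal_mul_coord hgp 1 2]
    simp [Pi.single_apply, ← hsdef, ← htdef, -mul_eq_mul_right_iff, -mul_eq_mul_left_iff]
    try simp only [hc1, hc2, ← hcdef]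
    try push_cast
    try ring
    try exact ⟨trivial, trivial⟩
    try (simp [Complex.ext_iff, Complex.mul_re, Complex.mul_im] <;> constructor <;> (try trivial) <;> ring)
  have p22 : wd 2 (fun w => wdbar 2 φ w) z = (-(2/9)*(1+(R:ℂ)^2)*(c:ℂ) - 10/9*(c:ℂ)*(s:ℂ))*(starRingEnd ℂ) (z 2)*z 2 + (2/3*(1+(R:ℂ)^2)*(c:ℂ)*(s:ℂ) - 5/3*(c:ℂ)*(s:ℂ)^2) := by
    rw [wd_congr hEp2 2, wd_ofReal_mul_coord hgp 2 2]
    simp [Pi.single_apply, ← hsdef, ← htdef, -mul_eq_mul_right_iff, -mul_eq_mul_left_iff]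
    try simp only [hc1, hc2, ← hcdef]
    try push_cast
    try ring
    try exact ⟨trivial, trivial⟩
    try (simp [Complex.ext_iff, Complex.mul_re, Complex.mul_im] <;> constructor <;> (try trivial) <;> ring)
  have htC : (t:ℂ) = z 0 * (starRingEnd ℂ) (z 0) := by
    rw [htdef]
    exact (Complex.mul_conj _).symm
  have hsC : (s:ℂ) = z 1 * (starRingEnd ℂ) (z 1) + z 2 * (starRingEnd ℂ) (z 2) := by
    rw [hsdef]
    show ((Complex.normSq (z 1) + Complex.normSq (z 2) : ℝ) : ℂ) = _
    push_cast
    rw [← Complex.mul_conj, ← Complex.mul_conj]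
  have hnt : Complex.normSq (z 0) = t := rfl
  rw [Matrix.trace_fin_three, Matrix.adjugate_fin_three]
  simp only [Matrix.mul_apply, Fin.sum_univ_three, Matrix.cons_val', Matrix.cons_val_zero,
    Matrix.cons_val_one, Matrix.head_cons, Matrix.empty_val', Matrix.cons_val_fin_one,
    Matrix.head_fin_const, Matrix.cons_val_two, Matrix.tail_cons, cHess, Matrix.of_apply]
  rw [u00, u01, u02, u10, u11, u12, u20, u21, u22, p00, p01, p02, p10, p11, p12, p20, p21, p22]
  rw [nsq'_eq, ← hsdef, hnt]
  push_cast
  rw [hsC] at hkey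
  rw [hsC, htC]
  linear_combination (-(70/27 + 50/27*(z 0 * (starRingEnd ℂ) (z 0))) * (z 1*(starRingEnd ℂ) (z 1)+z 2*(starRingEnd ℂ) (z 2)) + 16/27*(1+(R:ℂ)^2) + 8/27*(1+(R:ℂ)^2)*(z 0*(starRingEnd ℂ) (z 0))) * hkey
end
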